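/- arXiv:2509.13446 — 3 statements merged into one kernel-verified Lean document; each statement's English description precedes it below -/
import Mathlib

section
/- Define L̂0 := D/Π4 + √(D²/Π4² − Π1·D + 1), s₀ := L̂0/(Π4·q), s₁ := √(2·s₀/(Π4²·q)), s₂ := s₁·(Π4·L̂0 − D), and S := [[s₁, s₀],[s₀, s₂]]. Then S is a symmetric positive definite 2×2 real matrix satisfying the filter algebraic Riccati equation A·S + S·Aᵀ + B·Bᵀ − q·S·Cᵀ·C·S = 0, and the corresponding Kalman filter gain q·S·Cᵀ equals the 2×1 column vector [√(2·L̂0/Π4), L̂0]ᵀ. (This is the frequency-domain solution of the PDE-informed Kalman filtering problem with Sobolev-type measurement-noise cost of weight Π1.) -/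
open Matrix Real

/-!
Write `r := √((D/Π4)² + q)`. Then `L̂0 = D/Π4 + r` is the positive root of
`L² - 2(D/Π4)L = q`, because `r > |D/Π4|`. The Riccati equation for `S = [[s₁, s₀], [s₀, s₂]]`
splits into three scalar equations: the off-diagonal one is the definition of `s₂` once
`Π4·q·s₀ = L̂0`, the `(1,1)` one is the definition of `s₁`, and the `(2,2)` one is the quadratic
equation for `L̂0`. The same identities give `Π4²·q·det S = 1`, so `S` is positive definite.
-/

theorem Matrix.PosDef.of_fin_two {R : Type*} [CommRing R] [LinearOrder R] [IsStrictOrderedRing R]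
    [StarRing R] [TrivialStar R] {a b d : R} (ha : 0 < a) (hdet : 0 < a * d - b ^ 2) :
    (!![a, b; b, d]).PosDef := by
  refine .of_dotProduct_mulVec_pos (by ext i j; fin_cases i <;> fin_cases j <;> simp)
    fun x hx => ?_
  have hQ : a * (star x ⬝ᵥ (!![a, b; b, d] *ᵥ x)) =
      (a * x 0 + b * x 1) ^ 2 + (a * d - b ^ 2) * x 1 ^ 2 := by
    simp only [star_trivial, dotProduct, mulVec, Fin.sum_univ_two, of_apply, cons_val',
      cons_val_zero, cons_val_one, cons_val_fin_one]
    ring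
  refine pos_of_mul_pos_right (hQ ▸ ?_) ha.le
  rcases eq_or_ne (x 1) 0 with h1 | h1
  · have h0 : x 0 ≠ 0 := fun h0 => hx (by ext i; fin_cases i <;> assumption)
    rw [h1, mul_zero, add_zero, zero_pow two_ne_zero, mul_zero, add_zero]
    positivity
  · positivity

section FilterRiccati

variable {R : Type*} [CommRing R]

theorem filterRiccati_residual_fin_two (D c q s₀ s₁ s₂ : R) :
    let S : Matrix (Fin 2) (Fin 2) R := !![s₁, s₀; s₀, s₂]
    let B : Matrix (Fin 2) (Fin 1) R := !![0; 1]
    !![0, 1; D, 0] * S + S * (!![0, 1; D, 0])ᵀ + B * Bᵀ - q • (S * (!![c, 0])ᵀ * !![c, 0] * S) =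
      !![2 * s₀ - q * c ^ 2 * s₁ ^ 2, s₂ + D * s₁ - q * c ^ 2 * s₁ * s₀;
        s₂ + D * s₁ - q * c ^ 2 * s₁ * s₀, 2 * D * s₀ + 1 - q * c ^ 2 * s₀ ^ 2] := by
  ext i j
  fin_cases i <;> fin_cases j <;>
    simp [Matrix.mul_apply, Fin.sum_univ_two, vecHead, vecTail, vecMul, dotProduct] <;> ring

theorem filterGain_fin_two (c q s₀ s₁ s₂ : R) :
    q • (!![s₁, s₀; s₀, s₂] * (!![c, 0])ᵀ) = !![q * c * s₁; q * c * s₀] := by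
  ext i j
  fin_cases i <;> fin_cases j <;> simp [vecMul, dotProduct] <;> ring

end FilterRiccati

theorem add_sqrt_sq_add_pos {x q : ℝ} (hq : 0 < q) : 0 < x + √(x ^ 2 + q) := by
  have : |x| < √(x ^ 2 + q) := by
    rw [← sqrt_sq_eq_abs]
    exact sqrt_lt_sqrt (sq_nonneg x) (lt_add_of_pos_right _ hq)
  linarith [neg_abs_le x]

theorem add_sqrt_sq_add_sq_sub_two_mul {x q : ℝ} (hq : 0 ≤ q) :
    (x + √(x ^ 2 + q)) ^ 2 - 2 * x * (x + √(x ^ 2 + q)) = q := by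
  linear_combination sq_sqrt (add_nonneg (sq_nonneg x) hq)

theorem filterRiccati_solution_fin_two {D c q L s₀ s₁ s₂ : ℝ} (hc : 0 < c) (hq : 0 < q)
    (hL : 0 < L) (hroot : L ^ 2 - 2 * (D / c) * L = q) (hs₀ : s₀ = L / (c * q))
    (hs₁ : s₁ = √(2 * s₀ / (c ^ 2 * q))) (hs₂ : s₂ = s₁ * (c * L - D)) :
    let S : Matrix (Fin 2) (Fin 2) ℝ := !![s₁, s₀; s₀, s₂]
    let B : Matrix (Fin 2) (Fin 1) ℝ := !![0; 1]
    S.IsSymm ∧ S.PosDef ∧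
      !![0, 1; D, 0] * S + S * (!![0, 1; D, 0])ᵀ + B * Bᵀ
        - q • (S * (!![c, 0])ᵀ * !![c, 0] * S) = 0 ∧
      q • (S * (!![c, 0])ᵀ) = !![√(2 * L / c); L] := by
  intro S B
  have hs₀_pos : 0 < s₀ := hs₀ ▸ by positivity
  have hs₁_pos : 0 < s₁ := hs₁ ▸ sqrt_pos.2 (by positivity)
  have h₀ : q * c * s₀ = L := by rw [hs₀]; field_simp
  have h₁ : c ^ 2 * q * s₁ ^ 2 = 2 * s₀ := by rw [hs₁, sq_sqrt (by positivity)]; field_simp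
  have h₂ : q * c ^ 2 * s₀ ^ 2 - 2 * D * s₀ - 1 = 0 := by
    have hroot' : c * L ^ 2 - 2 * D * L = c * q := by
      field_simp at hroot
      linear_combination hroot
    refine mul_left_cancel₀ (mul_pos hc hq).ne' ?_
    linear_combination (c * (q * c * s₀ + L) - 2 * D) * h₀ + hroot'
  have hdet : c ^ 2 * q * (s₁ * s₂ - s₀ ^ 2) = 1 := by
    rw [hs₂]
    linear_combination (c * L - D) * h₁ - 2 * c * s₀ * h₀ + h₂
  have hgain : 2 * L / c = (q * c * s₁) ^ 2 := by
    rw [div_eq_iff hc.ne']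
    linear_combination (-(c * q)) * h₁ - 2 * h₀
  refine ⟨IsSymm.ext fun i j => ?_, .of_fin_two hs₁_pos ?_, ?_, ?_⟩
  · fin_cases i <;> fin_cases j <;> rfl
  · exact pos_of_mul_pos_right (hdet ▸ one_pos) (by positivity)
  · rw [filterRiccati_residual_fin_two, show 2 * s₀ - q * c ^ 2 * s₁ ^ 2 = 0 by linarith,
      show s₂ + D * s₁ - q * c ^ 2 * s₁ * s₀ = 0 by rw [hs₂]; linear_combination -c * s₁ * h₀,
      show 2 * D * s₀ + 1 - q * c ^ 2 * s₀ ^ 2 = 0 by linarith]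
    exact (eta_fin_two 0).symm
  · rw [filterGain_fin_two, hgain, sqrt_sq (by positivity), h₀]

theorem kf_riccati_solution_sobolev_general (n : ℕ) (k : Fin n)
    (Pi1 Pi4 : ℝ) (hPi1 : 0 ≤ Pi1) (hPi4 : 0 < Pi4) :
    let D : ℝ := -4 * Real.sin (Real.pi * ((k : ℕ) : ℝ) / (n : ℝ)) ^ 2
    let q : ℝ := 1 - Pi1 * D
    let A : Matrix (Fin 2) (Fin 2) ℝ := !![0, 1; D, 0]
    let B : Matrix (Fin 2) (Fin 1) ℝ := !![0; 1]
    let C : Matrix (Fin 1) (Fin 2) ℝ := !![Pi4, 0]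
    let L₀ : ℝ := D / Pi4 + Real.sqrt (D ^ 2 / Pi4 ^ 2 - Pi1 * D + 1)
    let s₀ : ℝ := L₀ / (Pi4 * q)
    let s₁ : ℝ := Real.sqrt (2 * s₀ / (Pi4 ^ 2 * q))
    let s₂ : ℝ := s₁ * (Pi4 * L₀ - D)
    let S : Matrix (Fin 2) (Fin 2) ℝ := !![s₁, s₀; s₀, s₂]
    S.IsSymm ∧ S.PosDef ∧
      A * S + S * Aᵀ + B * Bᵀ - q • (S * Cᵀ * C * S) = 0 ∧
      q • (S * Cᵀ) = !![Real.sqrt (2 * L₀ / Pi4); L₀] := by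
  intro D q A B C L₀ s₀ s₁ s₂ S
  have hq : 0 < q := by
    have hD : D ≤ 0 := by simp only [D]; nlinarith [sq_nonneg (sin (π * k / n))]
    nlinarith
  have hL₀ : L₀ = D / Pi4 + √((D / Pi4) ^ 2 + q) := by simp only [L₀, q]; ring_nf
  exact filterRiccati_solution_fin_two hPi4 hq (hL₀ ▸ add_sqrt_sq_add_pos hq)
    (hL₀ ▸ add_sqrt_sq_add_sq_sub_two_mul hq.le) rfl rfl rfl

/-- Frequency-domain solution of the PDE-informed Kalman filtering problem with
Sobolev-type measurement-noise cost of weight `Π1`: the matrix `S` built from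
`s₀, s₁, s₂` is the symmetric positive definite solution of the filter
algebraic Riccati equation with measurement weight `q = 1 − Π1·D`, and the
Kalman gain `q·S·Cᵀ` is `[√(2·L̂0/Π4), L̂0]ᵀ` with
`L̂0 = D/Π4 + √(D²/Π4² − Π1·D + 1)`. -/
theorem kf_riccati_solution_sobolev (n : ℕ) (hn : 1 ≤ n) (k : Fin n)
    (Pi1 Pi4 : ℝ) (hPi1 : 0 ≤ Pi1) (hPi4 : 0 < Pi4) :
    let D : ℝ := -4 * Real.sin (Real.pi * ((k : ℕ) : ℝ) / (n : ℝ)) ^ 2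
    let q : ℝ := 1 - Pi1 * D
    let A : Matrix (Fin 2) (Fin 2) ℝ := !![0, 1; D, 0]
    let B : Matrix (Fin 2) (Fin 1) ℝ := !![0; 1]
    let C : Matrix (Fin 1) (Fin 2) ℝ := !![Pi4, 0]
    let L₀ : ℝ := D / Pi4 + Real.sqrt (D ^ 2 / Pi4 ^ 2 - Pi1 * D + 1)
    let s₀ : ℝ := L₀ / (Pi4 * q)
    let s₁ : ℝ := Real.sqrt (2 * s₀ / (Pi4 ^ 2 * q))
    let s₂ : ℝ := s₁ * (Pi4 * L₀ - D)
    let S : Matrix (Fin 2) (Fin 2) ℝ := !![s₁, s₀; s₀, s₂]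
    S.IsSymm ∧ S.PosDef ∧
      A * S + S * Aᵀ + B * Bᵀ - q • (S * Cᵀ * C * S) = 0 ∧
      q • (S * Cᵀ) = !![Real.sqrt (2 * L₀ / Pi4); L₀] :=
  kf_riccati_solution_sobolev_general n k Pi1 Pi4 hPi1 hPi4
end

section
/- Define L̂0 := D/Π4 + √(D²/Π4² − Π1·D + 1) and L̂1 := √(2·L̂0/Π4). Then the closed-loop estimator matrix A − [L̂1, L̂0]ᵀ·C = [[−Π4·L̂1, 1],[D − Π4·L̂0, 0]] is Hurwitz: every eigenvalue λ ∈ ℂ of this 2×2 real matrix satisfies Re λ < 0. -/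
/-!
The closed-loop matrix has trace `-Π4·L̂1` and determinant `Π4·L̂0 - D`, so its characteristic
polynomial is `λ² + Π4·L̂1·λ + (Π4·L̂0 - D)`. Since `D ≤ 0` and `Π1 ≥ 0`, the square root in `L̂0`
exceeds `|D/Π4|`, hence `L̂0 > 0`, `L̂1 > 0`, and both coefficients are positive. A real quadratic
with positive coefficients has all its complex roots in the open left half-plane.
-/

open Matrix Polynomial

theorem Complex.re_neg_of_sq_add_mul_add_eq_zero {a b : ℝ} (ha : 0 < a) (hb : 0 < b) {μ : ℂ}
    (h : μ ^ 2 + a * μ + b = 0) : μ.re < 0 := by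
  have hre : μ.re ^ 2 - μ.im ^ 2 + a * μ.re + b = 0 := by
    simpa [pow_two] using congrArg Complex.re h
  have him : μ.im * (2 * μ.re + a) = 0 := by
    linear_combination (by simpa [pow_two] using congrArg Complex.im h : _ = _)
  by_contra! hμ
  -- for `re μ ≥ 0` the imaginary part forces `μ` to be real, and then every term is positive
  have hreal : μ.im = 0 := (mul_eq_zero.1 him).resolve_right (by linarith)
  nlinarith

theorem Matrix.re_neg_of_charpoly_map_eval_eq_zero {M : Matrix (Fin 2) (Fin 2) ℝ}
    (htr : M.trace < 0) (hdet : 0 < M.det) {μ : ℂ}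
    (hμ : (M.map (algebraMap ℝ ℂ)).charpoly.eval μ = 0) : μ.re < 0 := by
  rw [charpoly_map, eval_map_algebraMap, charpoly_fin_two] at hμ
  refine Complex.re_neg_of_sq_add_mul_add_eq_zero (neg_pos.2 htr) hdet ?_
  simpa [sub_eq_add_neg] using hμ

theorem add_sqrt_sq_add_pos_s9 (t : ℝ) {c : ℝ} (hc : 0 < c) : 0 < t + √(t ^ 2 + c) := by
  have : |t| < √(t ^ 2 + c) := Real.lt_sqrt (abs_nonneg t) |>.2 (by rw [sq_abs]; linarith)
  linarith [neg_abs_le t]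

theorem kf_closed_loop_hurwitz_general (n : ℕ) (k : Fin n)
    (Pi1 Pi4 : ℝ) (hPi1 : 0 ≤ Pi1) (hPi4 : 0 < Pi4) :
    let D : ℝ := -4 * Real.sin (Real.pi * ((k : ℕ) : ℝ) / (n : ℝ)) ^ 2
    let A : Matrix (Fin 2) (Fin 2) ℝ := !![0, 1; D, 0]
    let C : Matrix (Fin 1) (Fin 2) ℝ := !![Pi4, 0]
    let L₀ : ℝ := D / Pi4 + Real.sqrt (D ^ 2 / Pi4 ^ 2 - Pi1 * D + 1)
    let L₁ : ℝ := Real.sqrt (2 * L₀ / Pi4)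
    A - !![L₁; L₀] * C = !![-(Pi4 * L₁), 1; D - Pi4 * L₀, 0] ∧
      ∀ μ : ℂ, (((A - !![L₁; L₀] * C).map (algebraMap ℝ ℂ)).charpoly.eval μ = 0) →
        μ.re < 0 := by
  intro D A C L₀ L₁
  have hD : D ≤ 0 := by
    have := sq_nonneg (Real.sin (Real.pi * ((k : ℕ) : ℝ) / (n : ℝ)))
    linarith
  have hL₀ : 0 < L₀ := by
    have hrad : D ^ 2 / Pi4 ^ 2 - Pi1 * D + 1 = (D / Pi4) ^ 2 + (1 - Pi1 * D) := by ring
    simpa only [L₀, hrad] using add_sqrt_sq_add_pos_s9 (D / Pi4) (by nlinarith)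
  have hL₁ : 0 < L₁ := Real.sqrt_pos.2 (by positivity)
  have hM : A - !![L₁; L₀] * C = !![-(Pi4 * L₁), 1; D - Pi4 * L₀, 0] := by
    ext i j
    fin_cases i <;> fin_cases j <;> simp [A, C, mul_comm]
  refine ⟨hM, fun μ hμ => ?_⟩
  rw [hM] at hμ
  refine Matrix.re_neg_of_charpoly_map_eval_eq_zero ?_ ?_ hμ
  · simpa [trace_fin_two] using mul_pos hPi4 hL₁
  · simp only [det_fin_two_of]
    nlinarith

/-- The closed-loop estimator matrix
`A − [L̂1, L̂0]ᵀ·C = [[−Π4·L̂1, 1],[D − Π4·L̂0, 0]]` of the frequency-domain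
Kalman filter for the discretized wave equation is Hurwitz: every complex
eigenvalue has strictly negative real part. -/
theorem kf_closed_loop_hurwitz (n : ℕ) (hn : 1 ≤ n) (k : Fin n)
    (Pi1 Pi4 : ℝ) (hPi1 : 0 ≤ Pi1) (hPi4 : 0 < Pi4) :
    let D : ℝ := -4 * Real.sin (Real.pi * ((k : ℕ) : ℝ) / (n : ℝ)) ^ 2
    let A : Matrix (Fin 2) (Fin 2) ℝ := !![0, 1; D, 0]
    let C : Matrix (Fin 1) (Fin 2) ℝ := !![Pi4, 0]
    let L₀ : ℝ := D / Pi4 + Real.sqrt (D ^ 2 / Pi4 ^ 2 - Pi1 * D + 1)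
    let L₁ : ℝ := Real.sqrt (2 * L₀ / Pi4)
    A - !![L₁; L₀] * C = !![-(Pi4 * L₁), 1; D - Pi4 * L₀, 0] ∧
      ∀ μ : ℂ, (((A - !![L₁; L₀] * C).map (algebraMap ℝ ℂ)).charpoly.eval μ = 0) →
        μ.re < 0 :=
  kf_closed_loop_hurwitz_general n k Pi1 Pi4 hPi1 hPi4
end

section
/- Let n ≥ 2, Π1 ≥ 0, and Π3 > 0. Then the Fourier-domain LQR gain K̂0(k) := D_k + √(D_k² + Π3²·(1 − Π1·D_k)) is constant over k ∈ {0,…,n−1} (i.e., K̂0(k) = K̂0(0) for all k) if and only if Π1·Π3 = 2. -/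
/-- The `k`-th eigenvalue `−4·sin²(πk/n)` of the discrete periodic Laplacian. -/
noncomputable def Dlap (n k : ℕ) : ℝ := -4 * Real.sin (Real.pi * k / n) ^ 2

/-- The scalar Fourier-domain LQR gain at spatial frequency `k` for the
PDE-informed LQR problem with Sobolev weight `Π1` and control weight `1/Π3²`. -/
noncomputable def Khat0 (n : ℕ) (Pi1 Pi3 : ℝ) (k : ℕ) : ℝ :=
  Dlap n k + Real.sqrt ((Dlap n k) ^ 2 + Pi3 ^ 2 * (1 - Pi1 * Dlap n k))

/-!
Since `D_0 = 0`, the gain at frequency `0` is `Π3`. For `D ≤ 0` the equation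
`D + √(D² + Π3²(1 − Π1 D)) = Π3` squares to `Π3 · D · (Π1 Π3 − 2) = 0`, so a nonzero
eigenvalue (e.g. `D_1`, which exists as `n ≥ 2`) has gain `Π3` exactly when `Π1 Π3 = 2`.
-/

lemma Dlap_zero (n : ℕ) : Dlap n 0 = 0 := by
  simp [Dlap]

lemma Dlap_nonpos (n k : ℕ) : Dlap n k ≤ 0 := by
  unfold Dlap
  nlinarith [sq_nonneg (Real.sin (Real.pi * k / n))]

lemma Dlap_neg {n k : ℕ} (hk : 0 < k) (hkn : k < n) : Dlap n k < 0 := by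
  have hn : (0 : ℝ) < n := by exact_mod_cast hk.trans hkn
  have hsin : 0 < Real.sin (Real.pi * k / n) := by
    apply Real.sin_pos_of_pos_of_lt_pi
    · have : (0 : ℝ) < k := by exact_mod_cast hk
      positivity
    · rw [div_lt_iff₀ hn]
      exact mul_lt_mul_of_pos_left (by exact_mod_cast hkn) Real.pi_pos
  unfold Dlap
  nlinarith [pow_pos hsin 2]

lemma add_sqrt_eq_iff {c d p : ℝ} (hdc : d < c) (hc : c ≠ 0) :
    d + √(d ^ 2 + c ^ 2 * (1 - p * d)) = c ↔ d = 0 ∨ p * c = 2 := by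
  calc d + √(d ^ 2 + c ^ 2 * (1 - p * d)) = c
      ↔ (c - d) * (c - d) = d ^ 2 + c ^ 2 * (1 - p * d) := by
        rw [← Real.sqrt_eq_iff_mul_self_eq_of_pos (sub_pos.mpr hdc)]
        constructor <;> intro h <;> linarith
    _ ↔ c * (d * (p * c - 2)) = 0 := by
        constructor <;> intro h <;> linarith
    _ ↔ d = 0 ∨ p * c = 2 := by
        rw [mul_eq_zero, mul_eq_zero, sub_eq_zero]
        simp only [hc, false_or]

lemma Khat0_eq_iff (n : ℕ) {Pi1 Pi3 : ℝ} (hPi3 : 0 < Pi3) (k : ℕ) :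
    Khat0 n Pi1 Pi3 k = Pi3 ↔ Dlap n k = 0 ∨ Pi1 * Pi3 = 2 :=
  add_sqrt_eq_iff ((Dlap_nonpos n k).trans_lt hPi3) hPi3.ne'

theorem lqr_gain_constant_iff_general (n : ℕ) (hn : 2 ≤ n) (Pi1 Pi3 : ℝ)
    (hPi3 : 0 < Pi3) :
    (∀ k : ℕ, k < n → Khat0 n Pi1 Pi3 k = Khat0 n Pi1 Pi3 0) ↔ Pi1 * Pi3 = 2 := by
  rw [(Khat0_eq_iff n hPi3 0).mpr (Or.inl (Dlap_zero n))]
  simp only [Khat0_eq_iff n hPi3]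
  constructor
  · intro h
    exact (h 1 (by omega)).resolve_left (Dlap_neg one_pos (by omega)).ne
  · intro h k _
    exact Or.inr h

/-- The Fourier-domain LQR gain `K̂0(k)` is constant over `k ∈ {0,…,n−1}`
(complete decentralization of the LQR feedback gain) if and only if
`Π1·Π3 = 2`. -/
theorem lqr_gain_constant_iff (n : ℕ) (hn : 2 ≤ n) (Pi1 Pi3 : ℝ)
    (hPi1 : 0 ≤ Pi1) (hPi3 : 0 < Pi3) :
    (∀ k : ℕ, k < n → Khat0 n Pi1 Pi3 k = Khat0 n Pi1 Pi3 0) ↔ Pi1 * Pi3 = 2 :=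
  lqr_gain_constant_iff_general n hn Pi1 Pi3 hPi3
end
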